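/- (Eigenvalue upper bound in Corollary 2.1.) Let δ ∈ ℝ^{d×m} with Frobenius norm ‖δ‖₂ ≤ Δ, and suppose δWᵀ is symmetric positive semidefinite. Set δ_u = δUᵀe ∈ ℝ^d, Σ_δ = (I_d + (1/m)δWᵀ)^{−1}, and μ_δ = −(1/m)·Σ_δ·δ_u. Let σ₁ ≤ σ₂ ≤ … ≤ σ_d be the eigenvalues of Σ_δ^{−1} = I_d + (1/m)δWᵀ. Then ½·[ log det Σ_δ − d + tr(Σ_δ^{−1}) + μ_δᵀΣ_δ^{−1}μ_δ ] ≤ ½·[ Σ_{i=1}^d (σ_i − log σ_i) − d + (σ_d/m²)·‖Uᵀe‖₂²·Δ² ]. -/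

import Mathlib

open Matrix
open scoped RealInnerProductSpace

/-!
With `B = (1/m)·δWᵀ ⪰ 0` we have `Σ_δ⁻¹ = I + B`, so `log det Σ_δ = -∑ log σᵢ` and
`tr Σ_δ⁻¹ = ∑ σᵢ` account for the eigenvalue sum exactly. The quadratic term equals
`m⁻²·δ_uᵀ Σ_δ δ_u`; as `(I + B)⁻¹ ⪯ I` it is at most `m⁻²‖δ_u‖² ≤ m⁻²‖δ‖₂²‖Uᵀe‖²`
(Cauchy–Schwarz row by row), and this is at most the claimed term because every eigenvalue
of `I + B`, in particular `σ_d`, is at least `1`.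
-/

/-- The covariance `Σ_δ = (I_d + (1/m)·δWᵀ)⁻¹`. -/
noncomputable def SigmaDelta (d m : ℕ) (W δ : Matrix (Fin d) (Fin m) ℝ) :
    Matrix (Fin d) (Fin d) ℝ :=
  (1 + (m : ℝ)⁻¹ • (δ * Wᵀ))⁻¹

/-- The shifted input `δ_u = δ Uᵀ e ∈ ℝ^d`. -/
noncomputable def deltaU (d m de : ℕ) (U : Matrix (Fin de) (Fin m) ℝ) (e : Fin de → ℝ)
    (δ : Matrix (Fin d) (Fin m) ℝ) : Fin d → ℝ :=
  δ.mulVec (Uᵀ.mulVec e)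

/-- The mean `μ_δ = −(1/m)·Σ_δ·δ_u ∈ ℝ^d`. -/
noncomputable def muDelta (d m de : ℕ) (W : Matrix (Fin d) (Fin m) ℝ)
    (U : Matrix (Fin de) (Fin m) ℝ) (e : Fin de → ℝ)
    (δ : Matrix (Fin d) (Fin m) ℝ) : EuclideanSpace ℝ (Fin d) :=
  -((m : ℝ)⁻¹ • ((WithLp.equiv 2 _).symm
      ((SigmaDelta d m W δ).mulVec (deltaU d m de U e δ)) : EuclideanSpace ℝ (Fin d)))

/-- The Frobenius norm `‖δ‖₂` of a matrix. -/
noncomputable def frobNorm (d m : ℕ) (δ : Matrix (Fin d) (Fin m) ℝ) : ℝ :=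
  Real.sqrt (∑ i, ∑ j, δ i j ^ 2)

namespace Matrix

variable {n : Type*} [Fintype n]

lemma dotProduct_mulVec_self_le {m : Type*} [Fintype m] (A : Matrix m n ℝ) (v : n → ℝ) :
    A *ᵥ v ⬝ᵥ A *ᵥ v ≤ (∑ i, ∑ j, A i j ^ 2) * (v ⬝ᵥ v) := by
  have hv : v ⬝ᵥ v = ∑ j, v j ^ 2 := by simp [dotProduct, sq]
  rw [hv, Finset.sum_mul]
  refine Finset.sum_le_sum fun i _ => ?_
  rw [← sq]
  exact Finset.sum_mul_sq_le_sq_mul_sq _ _ _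

variable [DecidableEq n]

lemma PosSemidef.isUnit_det_one_add {B : Matrix n n ℝ} (hB : B.PosSemidef) :
    IsUnit (1 + B).det :=
  (PosDef.one.add_posSemidef hB).det_pos.ne'.isUnit

lemma IsHermitian.one_le_eigenvalues {A : Matrix n n ℝ} (hA : A.IsHermitian)
    (h : (A - 1).PosSemidef) (i : n) : 1 ≤ hA.eigenvalues i := by
  set v := ⇑(hA.eigenvectorBasis i)
  have hv : v ⬝ᵥ v = 1 := by
    have hnorm := real_inner_self_eq_norm_sq (hA.eigenvectorBasis i)
    rw [hA.eigenvectorBasis.orthonormal.1 i, EuclideanSpace.inner_eq_star_dotProduct] at hnorm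
    simpa using hnorm
  have hquad := h.dotProduct_mulVec_nonneg v
  rw [sub_mulVec, one_mulVec, dotProduct_sub, star_trivial, hv] at hquad
  rw [hA.eigenvalues_eq, star_trivial]
  simpa using hquad

lemma PosDef.log_det {A : Matrix n n ℝ} (hA : A.PosDef) :
    Real.log A.det = ∑ i, Real.log (hA.isHermitian.eigenvalues i) := by
  rw [hA.isHermitian.det_eq_prod_eigenvalues]
  exact Real.log_prod fun i _ => (hA.eigenvalues_pos i).ne'

lemma log_det_inv (A : Matrix n n ℝ) : Real.log A⁻¹.det = -Real.log A.det := by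
  rw [det_nonsing_inv, Ring.inverse_eq_inv', Real.log_inv]

/-- Since `x = s + B s` for `s = (1 + B)⁻¹ x`, the gap is `x ⬝ᵥ x - x ⬝ᵥ s = s ⬝ᵥ B s + ‖B s‖²`. -/
lemma PosSemidef.dotProduct_inv_one_add_mulVec_le {B : Matrix n n ℝ} (hB : B.PosSemidef)
    (x : n → ℝ) : x ⬝ᵥ (1 + B)⁻¹ *ᵥ x ≤ x ⬝ᵥ x := by
  set s := (1 + B)⁻¹ *ᵥ x
  have hx : x = s + B *ᵥ s := by
    nth_rw 1 [← one_mulVec s]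
    rw [← add_mulVec, mulVec_mulVec, mul_nonsing_inv _ hB.isUnit_det_one_add, one_mulVec]
  have hsBs : 0 ≤ s ⬝ᵥ B *ᵥ s := by simpa using hB.dotProduct_mulVec_nonneg s
  have hBs : 0 ≤ B *ᵥ s ⬝ᵥ B *ᵥ s := by simpa using dotProduct_star_self_nonneg (B *ᵥ s)
  have hgap : x ⬝ᵥ x - x ⬝ᵥ s = s ⬝ᵥ B *ᵥ s + B *ᵥ s ⬝ᵥ B *ᵥ s := by
    rw [hx]
    simp only [dotProduct_add, add_dotProduct, dotProduct_comm (B *ᵥ s) s]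
    ring
  linarith

end Matrix

section

variable {d m de : ℕ} {W δ : Matrix (Fin d) (Fin m) ℝ}

lemma inv_sigmaDelta (hpsd : (δ * Wᵀ).PosSemidef) :
    (SigmaDelta d m W δ)⁻¹ = 1 + (m : ℝ)⁻¹ • (δ * Wᵀ) :=
  nonsing_inv_nonsing_inv _ (hpsd.smul (by positivity)).isUnit_det_one_add

lemma inner_muDelta_inv_sigmaDelta (hpsd : (δ * Wᵀ).PosSemidef)
    (U : Matrix (Fin de) (Fin m) ℝ) (e : Fin de → ℝ) :
    ⟪muDelta d m de W U e δ,
      ((WithLp.equiv 2 _).symm ((SigmaDelta d m W δ)⁻¹.mulVec (muDelta d m de W U e δ)) :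
        EuclideanSpace ℝ (Fin d))⟫
      = (m : ℝ)⁻¹ ^ 2 * (deltaU d m de U e δ ⬝ᵥ SigmaDelta d m W δ *ᵥ deltaU d m de U e δ) := by
  set u := deltaU d m de U e δ
  have hμ : ⇑(muDelta d m de W U e δ) = -((m : ℝ)⁻¹ • (SigmaDelta d m W δ *ᵥ u)) := rfl
  have hcancel : (SigmaDelta d m W δ)⁻¹ * SigmaDelta d m W δ = 1 := by
    rw [inv_sigmaDelta hpsd]
    exact mul_nonsing_inv _ (hpsd.smul (by positivity)).isUnit_det_one_add
  rw [EuclideanSpace.inner_eq_star_dotProduct, star_trivial]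
  simp only [WithLp.equiv_symm_apply, hμ, mulVec_neg, mulVec_smul, mulVec_mulVec, hcancel,
    one_mulVec, neg_dotProduct, dotProduct_neg, smul_dotProduct, dotProduct_smul, smul_eq_mul]
  ring

lemma inner_muDelta_le (hpsd : (δ * Wᵀ).PosSemidef) (U : Matrix (Fin de) (Fin m) ℝ)
    (e : Fin de → ℝ) {Δ : ℝ} (hδ : frobNorm d m δ ≤ Δ) :
    ⟪muDelta d m de W U e δ,
      ((WithLp.equiv 2 _).symm ((SigmaDelta d m W δ)⁻¹.mulVec (muDelta d m de W U e δ)) :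
        EuclideanSpace ℝ (Fin d))⟫
      ≤ (1 / (m : ℝ) ^ 2) *
          ‖((WithLp.equiv 2 _).symm (Uᵀ.mulVec e) : EuclideanSpace ℝ (Fin m))‖ ^ 2 * Δ ^ 2 := by
  set v := Uᵀ *ᵥ e
  have hv : ‖((WithLp.equiv 2 _).symm v : EuclideanSpace ℝ (Fin m))‖ ^ 2 = v ⬝ᵥ v := by
    rw [← real_inner_self_eq_norm_sq, EuclideanSpace.inner_eq_star_dotProduct]
    simp
  have hfrob : ∑ i, ∑ j, δ i j ^ 2 ≤ Δ ^ 2 := (Real.sqrt_le_iff.1 hδ).2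
  calc _ = (m : ℝ)⁻¹ ^ 2 * (deltaU d m de U e δ ⬝ᵥ SigmaDelta d m W δ *ᵥ deltaU d m de U e δ) :=
        inner_muDelta_inv_sigmaDelta hpsd U e
    _ ≤ (m : ℝ)⁻¹ ^ 2 * (δ *ᵥ v ⬝ᵥ δ *ᵥ v) := by
        gcongr
        exact (hpsd.smul (by positivity)).dotProduct_inv_one_add_mulVec_le _
    _ ≤ (m : ℝ)⁻¹ ^ 2 * ((∑ i, ∑ j, δ i j ^ 2) * (v ⬝ᵥ v)) := by
        gcongr
        exact dotProduct_mulVec_self_le δ v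
    _ ≤ (m : ℝ)⁻¹ ^ 2 * (Δ ^ 2 * (v ⬝ᵥ v)) := by
        have : 0 ≤ v ⬝ᵥ v := by simpa using dotProduct_star_self_nonneg v
        gcongr
    _ = _ := by
        rw [hv]
        ring

end

theorem eigenvalue_upper_bound_general (d m de : ℕ)
    (W : Matrix (Fin d) (Fin m) ℝ) (U : Matrix (Fin de) (Fin m) ℝ) (e : Fin de → ℝ)
    (δ : Matrix (Fin d) (Fin m) ℝ) (Δ : ℝ)
    (hδ : frobNorm d m δ ≤ Δ)
    (hpsd : (δ * Wᵀ).PosSemidef)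
    (hH : ((SigmaDelta d m W δ)⁻¹).IsHermitian)
    (σd : ℝ) (hσd : IsGreatest (Set.range hH.eigenvalues) σd) :
    (1 / 2) * (Real.log (SigmaDelta d m W δ).det - d + ((SigmaDelta d m W δ)⁻¹).trace +
        ⟪muDelta d m de W U e δ,
          ((WithLp.equiv 2 _).symm
            ((SigmaDelta d m W δ)⁻¹.mulVec (muDelta d m de W U e δ)) :
              EuclideanSpace ℝ (Fin d))⟫)
      ≤ (1 / 2) * ((∑ i, (hH.eigenvalues i - Real.log (hH.eigenvalues i))) - d +
          (σd / (m : ℝ) ^ 2) *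
            ‖((WithLp.equiv 2 _).symm (Uᵀ.mulVec e) : EuclideanSpace ℝ (Fin m))‖ ^ 2 *
            Δ ^ 2) := by
  have hB : ((m : ℝ)⁻¹ • (δ * Wᵀ)).PosSemidef := hpsd.smul (by positivity)
  have hinv := inv_sigmaDelta hpsd
  have hpd : (SigmaDelta d m W δ)⁻¹.PosDef := hinv ▸ PosDef.one.add_posSemidef hB
  have hσd_one : 1 ≤ σd := by
    obtain ⟨i, rfl⟩ := hσd.1
    exact hH.one_le_eigenvalues (by rwa [hinv, add_sub_cancel_left]) i
  have hlog : Real.log (SigmaDelta d m W δ).det = -∑ i, Real.log (hH.eigenvalues i) := by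
    have hSigma : SigmaDelta d m W δ = (SigmaDelta d m W δ)⁻¹⁻¹ := by rw [hinv]; rfl
    conv_lhs => rw [hSigma, log_det_inv, hpd.log_det]
  have htr : (SigmaDelta d m W δ)⁻¹.trace = ∑ i, hH.eigenvalues i := by
    simpa using hH.trace_eq_sum_eigenvalues
  have hquad := inner_muDelta_le hpsd U e hδ
  have hscale : (1 / (m : ℝ) ^ 2) *
        ‖((WithLp.equiv 2 _).symm (Uᵀ.mulVec e) : EuclideanSpace ℝ (Fin m))‖ ^ 2 * Δ ^ 2
      ≤ (σd / (m : ℝ) ^ 2) *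
        ‖((WithLp.equiv 2 _).symm (Uᵀ.mulVec e) : EuclideanSpace ℝ (Fin m))‖ ^ 2 * Δ ^ 2 := by
    gcongr
  rw [hlog, htr, Finset.sum_sub_distrib]
  linarith

/-- **Eigenvalue upper bound in Corollary 2.1.** For `δ` with Frobenius norm
`‖δ‖₂ ≤ Δ` and `δWᵀ` symmetric positive semidefinite, if `σ_1 ≤ … ≤ σ_d` are the eigenvalues
of `Σ_δ⁻¹ = I_d + (1/m)·δWᵀ` (with `σ_d` the largest), then
`½·[log det Σ_δ − d + tr(Σ_δ⁻¹) + μ_δᵀΣ_δ⁻¹μ_δ]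
  ≤ ½·[Σᵢ (σ_i − log σ_i) − d + (σ_d/m²)·‖Uᵀe‖₂²·Δ²]`. -/
theorem eigenvalue_upper_bound (d m de : ℕ) (hd : 0 < d) (hm : 0 < m) (hde : 0 < de)
    (W : Matrix (Fin d) (Fin m) ℝ) (U : Matrix (Fin de) (Fin m) ℝ) (e : Fin de → ℝ)
    (δ : Matrix (Fin d) (Fin m) ℝ) (Δ : ℝ)
    (hδ : frobNorm d m δ ≤ Δ)
    (hpsd : (δ * Wᵀ).PosSemidef)
    (hH : ((SigmaDelta d m W δ)⁻¹).IsHermitian)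
    (σd : ℝ) (hσd : IsGreatest (Set.range hH.eigenvalues) σd) :
    (1 / 2) * (Real.log (SigmaDelta d m W δ).det - d + ((SigmaDelta d m W δ)⁻¹).trace +
        ⟪muDelta d m de W U e δ,
          ((WithLp.equiv 2 _).symm
            ((SigmaDelta d m W δ)⁻¹.mulVec (muDelta d m de W U e δ)) :
              EuclideanSpace ℝ (Fin d))⟫)
      ≤ (1 / 2) * ((∑ i, (hH.eigenvalues i - Real.log (hH.eigenvalues i))) - d +
          (σd / (m : ℝ) ^ 2) *
            ‖((WithLp.equiv 2 _).symm (Uᵀ.mulVec e) : EuclideanSpace ℝ (Fin m))‖ ^ 2 *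
            Δ ^ 2) :=
  eigenvalue_upper_bound_general d m de W U e δ Δ hδ hpsd hH σd hσd
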